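/- arXiv:2008.02124 — 2 statements merged into one kernel-verified Lean document; each statement's English description precedes it below -/
import Mathlib

section
/- Let ρ be a fixed density matrix and let σ_μ be density matrices and p_μ > 0 probabilities with Σ_μ p_μ σ_μ ⊗ σ_μ = ρ ⊗ ρ. Then σ_μ = ρ for all μ. -/
open Matrix
open scoped Kronecker ComplexOrder

theorem stmt3 {n : Type*} [Fintype n] [DecidableEq n] {m : ℕ}
    (p : Fin m → ℝ) (hp : ∀ μ, 0 < p μ) (hps : ∑ μ, p μ = 1)
    (ρ : Matrix n n ℂ) (hρ : ρ.PosSemidef) (hρ1 : ρ.trace = 1)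
    (σ : Fin m → Matrix n n ℂ)
    (hσ : ∀ μ, (σ μ).PosSemidef) (hσ1 : ∀ μ, (σ μ).trace = 1)
    (hsum : ∑ μ, (p μ : ℂ) • (σ μ ⊗ₖ σ μ) = ρ ⊗ₖ ρ) :
    ∀ μ, σ μ = ρ := by
  have key : ∀ i j k l : n,
      ∑ μ, (p μ : ℂ) * (σ μ i j * σ μ k l) = ρ i j * ρ k l := by
    intro i j k l
    have h := congrFun (congrFun hsum (i, k)) (j, l)
    simpa [Matrix.sum_apply, Matrix.kroneckerMap_apply, Matrix.smul_apply,
      smul_eq_mul, mul_assoc] using h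
  have hmean : ∀ i j : n, ∑ μ, (p μ : ℂ) * σ μ i j = ρ i j := by
    intro i j
    have h : ∑ k : n, ∑ μ, (p μ : ℂ) * (σ μ i j * σ μ k k)
        = ∑ k : n, ρ i j * ρ k k := by
      exact Finset.sum_congr rfl fun k _ => key i j k k
    rw [Finset.sum_comm] at h
    have hl : ∀ μ : Fin m, ∑ k : n, (p μ : ℂ) * (σ μ i j * σ μ k k)
        = (p μ : ℂ) * σ μ i j := by
      intro μ
      rw [← Finset.mul_sum, ← Finset.mul_sum]
      have : ∑ k : n, σ μ k k = 1 := by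
        simpa [Matrix.trace, Matrix.diag] using hσ1 μ
      rw [this, mul_one]
    have hr : ∑ k : n, ρ i j * ρ k k = ρ i j := by
      rw [← Finset.mul_sum]
      have : ∑ k : n, ρ k k = 1 := by
        simpa [Matrix.trace, Matrix.diag] using hρ1
      rw [this, mul_one]
    rw [hr] at h
    rw [← h]
    exact (Finset.sum_congr rfl fun μ _ => (hl μ)).symm
  have hps' : ∑ μ, (p μ : ℂ) = 1 := by
    norm_cast
  intro μ0
  ext i j
  -- the key vanishing sum
  have hzero : ∑ μ, (p μ : ℂ) *
      ((σ μ i j - ρ i j) * (σ μ j i - ρ j i)) = 0 := by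
    have expand : ∀ μ : Fin m, (p μ : ℂ) *
        ((σ μ i j - ρ i j) * (σ μ j i - ρ j i))
        = (p μ : ℂ) * (σ μ i j * σ μ j i)
          - ρ j i * ((p μ : ℂ) * σ μ i j)
          - ρ i j * ((p μ : ℂ) * σ μ j i)
          + (ρ i j * ρ j i) * (p μ : ℂ) := by
      intro μ; ring
    rw [Finset.sum_congr rfl fun μ _ => expand μ]
    rw [Finset.sum_add_distrib, Finset.sum_sub_distrib, Finset.sum_sub_distrib,
      ← Finset.mul_sum, ← Finset.mul_sum, ← Finset.mul_sum,
      key i j j i, hmean i j, hmean j i, hps']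
    ring
  -- rewrite σ μ j i - ρ j i as conjugate
  have hconj : ∀ μ : Fin m, σ μ j i - ρ j i
      = (starRingEnd ℂ) (σ μ i j - ρ i j) := by
    intro μ
    have h1 : star (σ μ i j) = σ μ j i := (hσ μ).1.apply j i
    have h2 : star (ρ i j) = ρ j i := hρ.1.apply j i
    simp [map_sub, ← h1, ← h2]
  have hzero' : ∑ μ, ((p μ * Complex.normSq (σ μ i j - ρ i j) : ℝ) : ℂ) = 0 := by
    rw [← hzero]
    refine Finset.sum_congr rfl fun μ _ => ?_
    rw [hconj μ, Complex.mul_conj]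
    push_cast
    ring
  have hzeroR : ∑ μ, p μ * Complex.normSq (σ μ i j - ρ i j) = 0 := by
    have := hzero'
    rw [← Complex.ofReal_sum] at this
    exact_mod_cast this
  have hterm : p μ0 * Complex.normSq (σ μ0 i j - ρ i j) = 0 := by
    have := (Finset.sum_eq_zero_iff_of_nonneg (fun μ _ =>
      mul_nonneg (hp μ).le (Complex.normSq_nonneg _))).mp hzeroR μ0 (Finset.mem_univ _)
    exact this
  have : Complex.normSq (σ μ0 i j - ρ i j) = 0 := by
    rcases mul_eq_zero.mp hterm with h | h
    · exact absurd h (hp μ0).ne'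
    · exact h
  have := Complex.normSq_eq_zero.mp this
  exact sub_eq_zero.mp this
end

section
/- If there exists a unit vector |Q⟩ in C^K ⊗ (C^d)^{⊗n} whose reduced state on system 0 and any m of the systems 1,…,n is maximally mixed (equal to 1/(K d^m)), then K d^m ≤ √(K d^n); equivalently, K ≤ d^{n-2m} (quantum Singleton bound for pure codes). -/
/-
Writing the pure state `Q` as a matrix `A` from the kept systems (system `0` and the `m`
systems in `I`) to the traced-out ones, the reduced state is `A * Aᴴ`, so its rank is at most
the dimension `d ^ (n - m)` of the traced-out systems. A maximally mixed state on
`C^K ⊗ (C^d)^{⊗m}` has full rank `K * d ^ m`, whence `K * d ^ m ≤ d ^ (n - m)`; both forms of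
the bound are rearrangements of this inequality.
-/

open Matrix

/-- Merge an assignment on the subsystems in `I` with one on the complement. -/
def mergeFn {n d : ℕ} (I : Finset (Fin n)) (f : {i // i ∈ I} → Fin d)
    (h : {i // i ∉ I} → Fin d) : Fin n → Fin d :=
  fun i => if hi : i ∈ I then f ⟨i, hi⟩ else h ⟨i, hi⟩

/-- Reduced density matrix of the pure state `Q` on `C^K ⊗ (C^d)^{⊗n}`, keeping
system `0` (the `C^K` factor) and the subsystems in `I`. -/
noncomputable def red0 {K n d : ℕ} (I : Finset (Fin n))
    (Q : Fin K × (Fin n → Fin d) → ℂ) :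
    Matrix (Fin K × ({i // i ∈ I} → Fin d)) (Fin K × ({i // i ∈ I} → Fin d)) ℂ :=
  fun p q => ∑ h : {i // i ∉ I} → Fin d,
    Q (p.1, mergeFn I p.2 h) * star (Q (q.1, mergeFn I q.2 h))

theorem Matrix.rank_smul_one {ι 𝕜 : Type*} [Fintype ι] [DecidableEq ι] [Field 𝕜] {c : 𝕜}
    (hc : c ≠ 0) : (c • (1 : Matrix ι ι 𝕜)).rank = Fintype.card ι := by
  rw [rank_smul_of_mem_nonZeroDivisors _ (mem_nonZeroDivisors_of_ne_zero hc), rank_one]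

section Reshape

variable {K n d : ℕ}

def stateMatrix (I : Finset (Fin n)) (Q : Fin K × (Fin n → Fin d) → ℂ) :
    Matrix (Fin K × ({i // i ∈ I} → Fin d)) ({i // i ∉ I} → Fin d) ℂ :=
  fun p h => Q (p.1, mergeFn I p.2 h)

theorem red0_eq_stateMatrix_mul_conjTranspose (I : Finset (Fin n))
    (Q : Fin K × (Fin n → Fin d) → ℂ) :
    red0 I Q = stateMatrix I Q * (stateMatrix I Q)ᴴ := by
  ext p q
  simp only [red0, stateMatrix, mul_apply, conjTranspose_apply]

theorem rank_red0_le (I : Finset (Fin n)) (Q : Fin K × (Fin n → Fin d) → ℂ) :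
    (red0 I Q).rank ≤ d ^ (n - I.card) := by
  calc (red0 I Q).rank ≤ (stateMatrix I Q).rank := by
        rw [red0_eq_stateMatrix_mul_conjTranspose]
        exact rank_mul_le_left _ _
    _ ≤ Fintype.card ({i // i ∉ I} → Fin d) := rank_le_card_width _
    _ = d ^ (n - I.card) := by
        simp [Fintype.card_subtype_compl, Fintype.card_coe]

theorem mul_pow_card_le_of_red0_eq_smul_one {I : Finset (Fin n)}
    {Q : Fin K × (Fin n → Fin d) → ℂ}
    (hI : red0 I Q = (((K : ℂ) * (d : ℂ) ^ I.card))⁻¹ • (1 : Matrix _ _ ℂ)) :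
    K * d ^ I.card ≤ d ^ (n - I.card) := by
  rcases eq_or_ne ((K : ℂ) * (d : ℂ) ^ I.card) 0 with hc | hc
  · have : K * d ^ I.card = 0 := by exact_mod_cast hc
    simp [this]
  · calc K * d ^ I.card = (red0 I Q).rank := by
          rw [hI, rank_smul_one (inv_ne_zero hc)]
          simp
      _ ≤ d ^ (n - I.card) := rank_red0_le I Q

end Reshape

theorem pos_or_eq_zero_of_sum_eq_one {K n d : ℕ} {Q : Fin K × (Fin n → Fin d) → ℂ}
    (hQ : ∑ x, star (Q x) * Q x = 1) : 0 < d ∨ n = 0 := by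
  obtain ⟨x⟩ : Nonempty (Fin K × (Fin n → Fin d)) := by
    by_contra h
    rw [not_nonempty_iff, ← Finset.univ_eq_empty_iff] at h
    simp [h] at hQ
  rcases Nat.eq_zero_or_pos n with hn | hn
  · exact .inr hn
  · exact .inl (x.2 ⟨0, hn⟩).pos

theorem le_sqrt_of_mul_pow_le_pow_sub {K d : ℝ} {m n : ℕ} (hK : 0 ≤ K) (hd : 0 ≤ d)
    (hm : m ≤ n) (h : K * d ^ m ≤ d ^ (n - m)) : K * d ^ m ≤ √(K * d ^ n) := by
  apply Real.le_sqrt_of_sq_le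
  calc (K * d ^ m) ^ 2 = K * d ^ m * (K * d ^ m) := sq _
    _ ≤ K * d ^ m * d ^ (n - m) := by gcongr
    _ = K * d ^ n := by rw [mul_assoc, pow_mul_pow_sub _ hm]

theorem le_zpow_of_mul_pow_le_pow_sub {K d : ℝ} {m n : ℕ} (hd : 0 < d) (hm : m ≤ n)
    (h : K * d ^ m ≤ d ^ (n - m)) : K ≤ d ^ ((n : ℤ) - 2 * (m : ℤ)) := by
  have hexp : (n : ℤ) - 2 * (m : ℤ) = ((n - m : ℕ) : ℤ) - m := by omega
  rw [hexp, zpow_sub₀ hd.ne', zpow_natCast, zpow_natCast, le_div_iff₀ (by positivity)]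
  exact h

/-- Quantum Singleton bound for pure codes. -/
theorem stmt8 {K n d m : ℕ} (hm : m ≤ n)
    (Q : Fin K × (Fin n → Fin d) → ℂ)
    (hQ : ∑ x, star (Q x) * Q x = 1)
    (hmarg : ∀ I : Finset (Fin n), I.card = m →
      red0 I Q = (((K : ℂ) * (d : ℂ) ^ m))⁻¹ • (1 : Matrix _ _ ℂ)) :
    (K : ℝ) * (d : ℝ) ^ m ≤ Real.sqrt ((K : ℝ) * (d : ℝ) ^ n) ∧
      (K : ℝ) ≤ (d : ℝ) ^ ((n : ℤ) - 2 * (m : ℤ)) := by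
  obtain ⟨I, -, hI⟩ := Finset.exists_subset_card_eq
    (by simpa using hm : m ≤ (Finset.univ : Finset (Fin n)).card)
  have hbound : K * d ^ m ≤ d ^ (n - m) := by
    subst hI
    exact mul_pow_card_le_of_red0_eq_smul_one (hmarg I rfl)
  have hboundR : (K : ℝ) * (d : ℝ) ^ m ≤ (d : ℝ) ^ (n - m) := by exact_mod_cast hbound
  refine ⟨le_sqrt_of_mul_pow_le_pow_sub (by positivity) (by positivity) hm hboundR, ?_⟩
  rcases pos_or_eq_zero_of_sum_eq_one hQ with hd | rfl
  · exact le_zpow_of_mul_pow_le_pow_sub (by exact_mod_cast hd) hm hboundR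
  · obtain rfl : m = 0 := by omega
    simpa using hboundR
end
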